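/- arXiv:2411.01346 — 3 statements merged into one kernel-verified Lean document; each statement's English description precedes it below -/
import Mathlib

section
/- Let Ω ⊆ ℝⁿ and z̄ ∈ Ω. If the regular (Clarke) tangent cone T̂_Ω(z̄) equals the paratingent cone T^P_Ω(z̄), then this common set is a linear subspace of ℝⁿ. Consequently, Ω is strictly smooth at z̄ if and only if T̂_Ω(z̄) = T^P_Ω(z̄) = T_Ω(z̄) and this set is a linear subspace. -/
open Filter Topology Metric Set
open scoped RealInnerProductSpace NNReal ENNReal

noncomputable section

/-- Euclidean space `ℝⁿ`. -/
abbrev Euc (n : ℕ) : Type := EuclideanSpace ℝ (Fin n)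

section NormedDefs

variable {X Y : Type*} [NormedAddCommGroup X] [NormedSpace ℝ X]
  [NormedAddCommGroup Y] [NormedSpace ℝ Y]

/-- The (Bouligand) tangent cone to `Ω` at `z`. -/
def tanCone (Ω : Set X) (z : X) : Set X :=
  {w | ∃ (t : ℕ → ℝ) (wk : ℕ → X), (∀ k, 0 < t k) ∧ Tendsto t atTop (𝓝 0) ∧
      Tendsto wk atTop (𝓝 w) ∧ ∀ k, z + t k • wk k ∈ Ω}

/-- The regular (Clarke) tangent cone to `Ω` at `z`. -/
def clarkeCone (Ω : Set X) (z : X) : Set X :=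
  {w | ∀ (zk : ℕ → X) (t : ℕ → ℝ), (∀ k, zk k ∈ Ω) → Tendsto zk atTop (𝓝 z) →
      (∀ k, 0 < t k) → Tendsto t atTop (𝓝 0) →
      ∃ wk : ℕ → X, Tendsto wk atTop (𝓝 w) ∧ ∀ k, zk k + t k • wk k ∈ Ω}

/-- The paratingent cone to `Ω` at `z`. -/
def paraCone (Ω : Set X) (z : X) : Set X :=
  {w | ∃ (zk : ℕ → X) (t : ℕ → ℝ) (wk : ℕ → X), (∀ k, zk k ∈ Ω) ∧
      Tendsto zk atTop (𝓝 z) ∧ (∀ k, 0 < t k) ∧ Tendsto t atTop (𝓝 0) ∧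
      Tendsto wk atTop (𝓝 w) ∧ ∀ k, zk k + t k • wk k ∈ Ω}

/-- `Ω` is strictly smooth at `z` if the Clarke tangent cone and the paratingent
cone coincide there. -/
def StrictlySmoothAt (Ω : Set X) (z : X) : Prop := clarkeCone Ω z = paraCone Ω z

/-- `Ω` is geometrically derivable at `z`. -/
def GeomDerivableAt (Ω : Set X) (z : X) : Prop :=
  ∀ w ∈ tanCone Ω z, ∀ t : ℕ → ℝ, (∀ k, 0 < t k) → Tendsto t atTop (𝓝 0) →
    ∃ wk : ℕ → X, Tendsto wk atTop (𝓝 w) ∧ ∀ k, z + t k • wk k ∈ Ω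

/-- `Ω` is locally closed at `z`. -/
def LocallyClosedAt (Ω : Set X) (z : X) : Prop :=
  ∃ V : Set X, V ∈ 𝓝 z ∧ IsClosed V ∧ IsClosed (Ω ∩ V)

/-- The set `s` is a linear subspace. -/
def IsLinearSubspace (s : Set X) : Prop := ∃ S : Submodule ℝ X, (S : Set X) = s

/-- The set `s` is a linear subspace of dimension `d`. -/
def HasDim (s : Set X) (d : ℕ) : Prop :=
  ∃ S : Submodule ℝ X, (S : Set X) = s ∧ Module.finrank ℝ S = d

/-- The graph of a set-valued mapping. -/
def gphOf (Fm : X → Set Y) : Set (X × Y) := {p | p.2 ∈ Fm p.1}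

/-- The graph of a single-valued mapping defined on `U`. -/
def gphOn (f : X → Y) (U : Set X) : Set (X × Y) := {p | p.1 ∈ U ∧ p.2 = f p.1}

/-- `f` (defined on `U`) is strictly continuous (locally Lipschitz) at `xb`. -/
def StrictlyContinuousAt' (f : X → Y) (U : Set X) (xb : X) : Prop :=
  ∃ U' ∈ 𝓝 xb, U' ⊆ U ∧ ∃ κ : ℝ, 0 ≤ κ ∧
    ∀ x ∈ U', ∀ x' ∈ U', ‖f x - f x'‖ ≤ κ * ‖x - x'‖

/-- `f` (defined on `U`) is calm at `xb`. -/
def CalmAt' (f : X → Y) (U : Set X) (xb : X) : Prop :=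
  ∃ U' ∈ 𝓝 xb, U' ⊆ U ∧ ∃ κ : ℝ, 0 ≤ κ ∧ ∀ x ∈ U', ‖f x - f xb‖ ≤ κ * ‖x - xb‖

/-- `f` (defined on `U`) is strictly differentiable at `xb`. -/
def StrictDiffOnAt (f : X → Y) (U : Set X) (xb : X) : Prop :=
  ∃ A : X →L[ℝ] Y, ∀ ε : ℝ, 0 < ε → ∃ δ > 0, ∀ x ∈ U, ∀ x' ∈ U,
    ‖x - xb‖ < δ → ‖x' - xb‖ < δ → ‖f x' - f x - A (x' - x)‖ ≤ ε * ‖x' - x‖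

/-- `f` (defined on `U`) is Fréchet differentiable at `xb`. -/
def FrechetDiffOnAt (f : X → Y) (U : Set X) (xb : X) : Prop :=
  ∃ A : X →L[ℝ] Y, ∀ ε : ℝ, 0 < ε → ∃ δ > 0, ∀ x ∈ U,
    ‖x - xb‖ < δ → ‖f x - f xb - A (x - xb)‖ ≤ ε * ‖x - xb‖

/-- The B-Jacobian (Bouligand limiting Jacobian) of `f` at `xb`. -/
def BJacobian (f : X → Y) (U : Set X) (xb : X) : Set (X →L[ℝ] Y) :=
  {A | ∃ (xk : ℕ → X) (Ak : ℕ → X →L[ℝ] Y),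
      (∀ k, xk k ∈ U ∧ HasFDerivAt f (Ak k) (xk k)) ∧
      Tendsto xk atTop (𝓝 xb) ∧ Tendsto Ak atTop (𝓝 A)}

/-- `Ω ⊆ X` is a Lipschitz manifold of dimension `d` (and codimension `c`) around `z`:
up to a `C¹` change of coordinates `Φ`, `Ω` locally coincides with the graph of a
Lipschitz mapping `f : U → ℝᶜ`, `U ⊆ ℝᵈ` open. -/
def IsLipschitzManifoldAt (Ω : Set X) (d c : ℕ) (z : X) : Prop :=
  ∃ (W : Set X) (Φ : X → Euc d × Euc c) (Ψ : Euc d × Euc c → X)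
    (U : Set (Euc d)) (f : Euc d → Euc c) (K : ℝ≥0),
    IsOpen W ∧ z ∈ W ∧ IsOpen (Φ '' W) ∧
    ContDiffOn ℝ 1 Φ W ∧ ContDiffOn ℝ 1 Ψ (Φ '' W) ∧
    (∀ x ∈ W, Ψ (Φ x) = x) ∧ (∀ y ∈ Φ '' W, Φ (Ψ y) = y) ∧
    IsOpen U ∧ LipschitzOnWith K f U ∧
    Φ '' (Ω ∩ W) = {p | p.1 ∈ U ∧ p.2 = f p.1}

/-- As `IsLipschitzManifoldAt`, with the Lipschitz mapping `f` moreover strictly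
differentiable at the transformed reference point. -/
def IsGraphStrictDiffAt (Ω : Set X) (d c : ℕ) (z : X) : Prop :=
  ∃ (W : Set X) (Φ : X → Euc d × Euc c) (Ψ : Euc d × Euc c → X)
    (U : Set (Euc d)) (f : Euc d → Euc c) (K : ℝ≥0),
    IsOpen W ∧ z ∈ W ∧ IsOpen (Φ '' W) ∧
    ContDiffOn ℝ 1 Φ W ∧ ContDiffOn ℝ 1 Ψ (Φ '' W) ∧
    (∀ x ∈ W, Ψ (Φ x) = x) ∧ (∀ y ∈ Φ '' W, Φ (Ψ y) = y) ∧
    IsOpen U ∧ LipschitzOnWith K f U ∧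
    Φ '' (Ω ∩ W) = {p | p.1 ∈ U ∧ p.2 = f p.1} ∧
    StrictDiffOnAt f U (Φ z).1

/-- Strong metric subregularity of a set-valued mapping at `(xb, yb)`. -/
def StronglySubregAt (Fm : X → Set Y) (xb : X) (yb : Y) : Prop :=
  ∃ κ : ℝ≥0, ∃ U ∈ 𝓝 xb, ∀ x ∈ U,
    (‖x - xb‖₊ : ℝ≥0∞) ≤ (κ : ℝ≥0∞) * EMetric.infEdist yb (Fm x)

/-- Metric regularity of a set-valued mapping around `(xb, yb)`. -/
def MetricallyRegularAround (Fm : X → Set Y) (xb : X) (yb : Y) : Prop :=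
  ∃ κ : ℝ≥0, ∃ U ∈ 𝓝 xb, ∃ V ∈ 𝓝 yb, ∀ x ∈ U, ∀ y ∈ V,
    EMetric.infEdist x {x' | y ∈ Fm x'} ≤ (κ : ℝ≥0∞) * EMetric.infEdist y (Fm x)

/-- Strong metric regularity of a set-valued mapping around `(xb, yb)`. -/
def StronglyRegularAround (Fm : X → Set Y) (xb : X) (yb : Y) : Prop :=
  MetricallyRegularAround Fm xb yb ∧
  ∃ (U' : Set X) (V' : Set Y) (h : Y → X), IsOpen U' ∧ IsOpen V' ∧
    xb ∈ U' ∧ yb ∈ V' ∧ h yb = xb ∧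
    gphOf Fm ∩ (U' ×ˢ V') = {p | p.2 ∈ V' ∧ p.1 = h p.2}

end NormedDefs

section InnerDefs

variable {E F : Type*} [NormedAddCommGroup E] [InnerProductSpace ℝ E]
  [NormedAddCommGroup F] [InnerProductSpace ℝ F]

/-- The regular (Fréchet) normal cone: the polar of the tangent cone. -/
def regNormal (Ω : Set E) (z : E) : Set E := {v | ∀ w ∈ tanCone Ω z, ⟪v, w⟫ ≤ 0}

/-- The limiting (Mordukhovich) normal cone. -/
def limNormal (Ω : Set E) (z : E) : Set E :=
  {v | ∃ zk vk : ℕ → E, (∀ k, zk k ∈ Ω) ∧ Tendsto zk atTop (𝓝 z) ∧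
      (∀ k, vk k ∈ regNormal Ω (zk k)) ∧ Tendsto vk atTop (𝓝 v)}

/-- `Ω` is normally regular at `z`. -/
def NormallyRegularAt (Ω : Set E) (z : E) : Prop := regNormal Ω z = limNormal Ω z

/-- The orthogonal complement (as a set) of a set. -/
def orthSet (s : Set E) : Set E := {v | ∀ w ∈ s, ⟪v, w⟫ = 0}

/-- `Ω` is semismooth* at `zb`. -/
def SemismoothStarAt (Ω : Set E) (zb : E) : Prop :=
  ∀ ε : ℝ, 0 < ε → ∃ δ > 0, ∀ z ∈ Ω, ‖z - zb‖ < δ → ∀ v ∈ limNormal Ω z,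
    |⟪v, z - zb⟫| ≤ ε * ‖z - zb‖ * ‖v‖

/-- The canonical inner product of the product of two inner product spaces. -/
def inner2 (p q : E × F) : ℝ := ⟪p.1, q.1⟫ + ⟪p.2, q.2⟫

/-- The regular normal cone for subsets of a product space. -/
def regNormal2 (Ω : Set (E × F)) (z : E × F) : Set (E × F) :=
  {v | ∀ w ∈ tanCone Ω z, inner2 v w ≤ 0}

/-- The limiting normal cone for subsets of a product space. -/
def limNormal2 (Ω : Set (E × F)) (z : E × F) : Set (E × F) :=
  {v | ∃ zk vk : ℕ → E × F, (∀ k, zk k ∈ Ω) ∧ Tendsto zk atTop (𝓝 z) ∧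
      (∀ k, vk k ∈ regNormal2 Ω (zk k)) ∧ Tendsto vk atTop (𝓝 v)}

/-- Normal regularity for subsets of a product space. -/
def NormallyRegular2At (Ω : Set (E × F)) (z : E × F) : Prop :=
  regNormal2 Ω z = limNormal2 Ω z

/-- Orthogonal complement (as a set) in a product space. -/
def orthSet2 (s : Set (E × F)) : Set (E × F) := {v | ∀ w ∈ s, inner2 v w = 0}

/-- The graph of the limiting coderivative of a mapping with graph `Γ` at `z`:
`{(y*, x*) : (x*, -y*) ∈ N_Γ(z)}`. -/
def coderivGraph (Γ : Set (E × F)) (z : E × F) : Set (F × E) :=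
  {q | (q.2, -q.1) ∈ limNormal2 Γ z}

/-- The semismooth* property for subsets of a product space (i.e. for mappings). -/
def SemismoothStar2At (Ω : Set (E × F)) (zb : E × F) : Prop :=
  ∀ ε : ℝ, 0 < ε → ∃ δ > 0, ∀ z ∈ Ω, ‖z - zb‖ < δ → ∀ v ∈ limNormal2 Ω z,
    |inner2 v (z - zb)| ≤ ε * ‖z - zb‖ * ‖v‖

/-- The regular subdifferential of an extended-real-valued function. -/
def regSubdiff (φ : E → EReal) (xb : E) : Set E :=
  {v | φ xb ≠ ⊤ ∧ φ xb ≠ ⊥ ∧ ∀ ε : ℝ, 0 < ε → ∃ δ > 0, ∀ x, ‖x - xb‖ < δ →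
      φ xb + ((⟪v, x - xb⟫ - ε * ‖x - xb‖ : ℝ) : EReal) ≤ φ x}

/-- The limiting (Mordukhovich) subdifferential. -/
def limSubdiff (φ : E → EReal) (xb : E) : Set E :=
  {v | ∃ xk vk : ℕ → E, Tendsto xk atTop (𝓝 xb) ∧
      Tendsto (fun k => φ (xk k)) atTop (𝓝 (φ xb)) ∧
      (∀ k, vk k ∈ regSubdiff φ (xk k)) ∧ Tendsto vk atTop (𝓝 v)}

/-- `φ` is prox-regular at `xb` for `vb` with parameters `r ≥ 0` and `ε > 0`. -/
def ProxRegular (φ : E → EReal) (xb vb : E) (r ε : ℝ) : Prop :=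
  ∀ x' x v, ‖x' - xb‖ < ε → v ∈ limSubdiff φ x → ‖x - xb‖ < ε → ‖v - vb‖ < ε →
    φ x < φ xb + (ε : EReal) →
    φ x + ((⟪v, x' - x⟫ - r / 2 * ‖x' - x‖ ^ 2 : ℝ) : EReal) ≤ φ x'

/-- The graph of the `φ`-attentive `ε`-localization of `∂φ` around `(xb, vb)`. -/
def attLocGraph (φ : E → EReal) (xb vb : E) (ε : ℝ) : Set (E × E) :=
  {p | p.2 ∈ limSubdiff φ p.1 ∧ ‖p.1 - xb‖ < ε ∧ ‖p.2 - vb‖ < ε ∧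
      φ p.1 < φ xb + (ε : EReal)}

end InnerDefs

/-- The map `ℝⁿ → ℝᵈ × ℝᶜ` obtained from a permutation (re-indexing) of the
coordinates followed by splitting them into the first `d` and the last `c` ones. -/
def permSplit {n d c : ℕ} (e : Fin n ≃ (Fin d ⊕ Fin c)) (z : Euc n) : Euc d × Euc c :=
  (show Euc d from WithLp.toLp 2 (fun i => z (e.symm (Sum.inl i))),
   show Euc c from WithLp.toLp 2 (fun j => z (e.symm (Sum.inr j))))

/-! The Clarke cone is always a convex cone containing `0`, and the paratingent cone is
always symmetric under `w ↦ -w`. When the two coincide, the common cone is a convex cone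
closed under negation, that is, a linear subspace. The tangent cone lies between them, so
it coincides with both as well. -/

section TangentCones

variable {X : Type*} [NormedAddCommGroup X] [NormedSpace ℝ X]

lemma tendsto_add_smul_of_tendsto_zero {zk wk : ℕ → X} {t : ℕ → ℝ} {z w : X}
    (hzk : Tendsto zk atTop (𝓝 z)) (ht : Tendsto t atTop (𝓝 0))
    (hwk : Tendsto wk atTop (𝓝 w)) :
    Tendsto (fun k => zk k + t k • wk k) atTop (𝓝 z) := by
  simpa using hzk.add (ht.smul hwk)

lemma zero_mem_clarkeCone (Ω : Set X) (z : X) : (0 : X) ∈ clarkeCone Ω z :=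
  fun _ _ hzk _ _ _ => ⟨fun _ => 0, tendsto_const_nhds, fun k => by simpa using hzk k⟩

/-- Moving first along `w₁` lands in `Ω` at base points that still converge to `z`, from
which the Clarke property of `w₂` applies. -/
lemma add_mem_clarkeCone {Ω : Set X} {z w₁ w₂ : X}
    (h₁ : w₁ ∈ clarkeCone Ω z) (h₂ : w₂ ∈ clarkeCone Ω z) :
    w₁ + w₂ ∈ clarkeCone Ω z := by
  intro zk t hzk hz ht ht0
  obtain ⟨wk₁, hwk₁, hmem₁⟩ := h₁ zk t hzk hz ht ht0
  obtain ⟨wk₂, hwk₂, hmem₂⟩ := h₂ (fun k => zk k + t k • wk₁ k) t hmem₁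
    (tendsto_add_smul_of_tendsto_zero hz ht0 hwk₁) ht ht0
  exact ⟨fun k => wk₁ k + wk₂ k, hwk₁.add hwk₂, fun k => by
    simpa [smul_add, add_assoc] using hmem₂ k⟩

lemma smul_mem_clarkeCone {Ω : Set X} {z w : X} {c : ℝ} (hc : 0 < c)
    (h : w ∈ clarkeCone Ω z) : c • w ∈ clarkeCone Ω z := by
  intro zk t hzk hz ht ht0
  obtain ⟨wk, hwk, hmem⟩ := h zk (fun k => t k * c) hzk hz
    (fun k => mul_pos (ht k) hc) (by simpa using ht0.mul_const c)
  exact ⟨fun k => c • wk k, hwk.const_smul c, fun k => by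
    simpa [smul_smul, mul_comm] using hmem k⟩

/-- The roles of the two points `zₖ` and `zₖ + tₖ wₖ` of `Ω` can be exchanged. -/
lemma neg_mem_paraCone {Ω : Set X} {z w : X} (h : w ∈ paraCone Ω z) :
    -w ∈ paraCone Ω z := by
  obtain ⟨zk, t, wk, hzk, hz, ht, ht0, hwk, hmem⟩ := h
  exact ⟨fun k => zk k + t k • wk k, t, fun k => -wk k, hmem,
    tendsto_add_smul_of_tendsto_zero hz ht0 hwk, ht, ht0, hwk.neg,
    fun k => by simpa [smul_neg, add_assoc] using hzk k⟩

lemma clarkeCone_subset_tanCone {Ω : Set X} {z : X} (hz : z ∈ Ω) :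
    clarkeCone Ω z ⊆ tanCone Ω z := by
  intro w hw
  have ht0 : Tendsto (fun k : ℕ => 1 / ((k : ℝ) + 1)) atTop (𝓝 0) :=
    tendsto_one_div_add_atTop_nhds_zero_nat
  obtain ⟨wk, hwk, hmem⟩ := hw (fun _ => z) _ (fun _ => hz) tendsto_const_nhds
    (fun k => by positivity) ht0
  exact ⟨_, wk, fun k => by positivity, ht0, hwk, hmem⟩

lemma tanCone_subset_paraCone {Ω : Set X} {z : X} (hz : z ∈ Ω) :
    tanCone Ω z ⊆ paraCone Ω z := by
  rintro w ⟨t, wk, ht, ht0, hwk, hmem⟩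
  exact ⟨fun _ => z, t, wk, fun _ => hz, tendsto_const_nhds, ht, ht0, hwk, hmem⟩

lemma paraCone_eq_tanCone_of_clarkeCone_eq {Ω : Set X} {z : X} (hz : z ∈ Ω)
    (h : clarkeCone Ω z = paraCone Ω z) : paraCone Ω z = tanCone Ω z :=
  (h ▸ clarkeCone_subset_tanCone hz).antisymm (tanCone_subset_paraCone hz)

lemma neg_mem_clarkeCone_of_eq_paraCone {Ω : Set X} {z w : X}
    (h : clarkeCone Ω z = paraCone Ω z) (hw : w ∈ clarkeCone Ω z) :
    -w ∈ clarkeCone Ω z :=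
  h ▸ neg_mem_paraCone (h ▸ hw)

def clarkeConeSubmodule {Ω : Set X} {z : X} (h : clarkeCone Ω z = paraCone Ω z) :
    Submodule ℝ X where
  carrier := clarkeCone Ω z
  zero_mem' := zero_mem_clarkeCone Ω z
  add_mem' := add_mem_clarkeCone
  smul_mem' c w hw := by
    rcases lt_trichotomy c 0 with hc | rfl | hc
    · simpa using smul_mem_clarkeCone (neg_pos.mpr hc) (neg_mem_clarkeCone_of_eq_paraCone h hw)
    · simpa using zero_mem_clarkeCone Ω z
    · exact smul_mem_clarkeCone hc hw

lemma isLinearSubspace_clarkeCone_of_eq_paraCone {Ω : Set X} {z : X}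
    (h : clarkeCone Ω z = paraCone Ω z) : IsLinearSubspace (clarkeCone Ω z) :=
  ⟨clarkeConeSubmodule h, rfl⟩

end TangentCones

/-- If the Clarke tangent cone equals the paratingent cone at a point
of the set, then this common set is a linear subspace; consequently, `Ω` is strictly
smooth at `zb` iff `T̂ = T^P = T` and this set is a linear subspace. -/
theorem stmt_0 {n : ℕ} (Ω : Set (Euc n)) (zb : Euc n) (hz : zb ∈ Ω) :
    (clarkeCone Ω zb = paraCone Ω zb → IsLinearSubspace (clarkeCone Ω zb)) ∧
    (StrictlySmoothAt Ω zb ↔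
      (clarkeCone Ω zb = paraCone Ω zb ∧ paraCone Ω zb = tanCone Ω zb ∧
        IsLinearSubspace (clarkeCone Ω zb))) :=
  ⟨isLinearSubspace_clarkeCone_of_eq_paraCone,
    fun h => ⟨h, paraCone_eq_tanCone_of_clarkeCone_eq hz h,
      isLinearSubspace_clarkeCone_of_eq_paraCone h⟩,
    fun h => h.1⟩
end
end

section
/- A mapping F: U → ℝᵐ, where U ⊆ ℝⁿ is open, is Fréchet differentiable at x̄ ∈ U if and only if F is calm at x̄ and T_{gph F}(x̄, F(x̄)) is a linear subspace of ℝⁿ × ℝᵐ. Moreover, in this case dim T_{gph F}(x̄, F(x̄)) = n. -/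
open Filter Topology Metric Set
open scoped RealInnerProductSpace NNReal ENNReal

noncomputable section

/-!
Let `T` be the tangent cone to the graph at `(x̄, F x̄)`. Its elements are exactly the limits of
pairs `(uₖ, tₖ⁻¹ • (F (x̄ + tₖ • uₖ) - F x̄))` with `tₖ ↓ 0`. If `F` has derivative `A`, these
difference quotients tend to `A w`, so `T` is the graph of `A`, of dimension `n`.

Conversely, calmness with constant `κ` gives `‖v‖ ≤ κ‖w‖` on `T`, and the difference quotients
along a fixed direction are bounded, so by compactness `T` projects onto `ℝⁿ` and meets
`{0} × ℝᵐ` only at `0`: a subspace `T` is then the graph of a linear map `A`. If `A` were not the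
derivative, points `xₖ → x̄` violating the first-order estimate would give normalised directions
whose difference quotients stay away from the graph of `A`, and a cluster point of them would be
an element of `T` off that graph.
-/

open Asymptotics

section TangentConeOfGraph

variable {X Y : Type*} [NormedAddCommGroup X] [NormedSpace ℝ X]
  [NormedAddCommGroup Y] [NormedSpace ℝ Y]

lemma mem_tanCone_of_eventually {Ω : Set X} {z w : X} {t : ℕ → ℝ} {wk : ℕ → X}
    (hmem : ∀ᶠ k in atTop, 0 < t k ∧ z + t k • wk k ∈ Ω)
    (ht : Tendsto t atTop (𝓝 0)) (hw : Tendsto wk atTop (𝓝 w)) : w ∈ tanCone Ω z := by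
  obtain ⟨N, hN⟩ := eventually_atTop.mp hmem
  exact ⟨fun k => t (k + N), fun k => wk (k + N), fun k => (hN _ (by omega)).1,
    (tendsto_add_atTop_iff_nat N).mpr ht, (tendsto_add_atTop_iff_nat N).mpr hw,
    fun k => (hN _ (by omega)).2⟩

lemma eventually_add_smul_mem {x w : X} {V : Set X} {t : ℕ → ℝ} {u : ℕ → X}
    (hV : V ∈ 𝓝 x) (ht : Tendsto t atTop (𝓝 0)) (hu : Tendsto u atTop (𝓝 w)) :
    ∀ᶠ k in atTop, x + t k • u k ∈ V := by
  have : Tendsto (fun k => x + t k • u k) atTop (𝓝 x) := by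
    simpa using tendsto_const_nhds.add (ht.smul hu)
  exact this hV

def diffQuot (f : X → Y) (x : X) (t : ℝ) (u : X) : Y := t⁻¹ • (f (x + t • u) - f x)

lemma norm_diffQuot_le {f : X → Y} {x u : X} {t κ : ℝ} (ht : 0 < t)
    (h : ‖f (x + t • u) - f x‖ ≤ κ * ‖x + t • u - x‖) : ‖diffQuot f x t u‖ ≤ κ * ‖u‖ := by
  rw [add_sub_cancel_left, norm_smul, Real.norm_of_nonneg ht.le] at h
  rw [diffQuot, norm_smul, norm_inv, Real.norm_of_nonneg ht.le, inv_mul_le_iff₀ ht]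
  linear_combination h

lemma diffQuot_sub_eq_inv_smul {f : X → Y} {x u : X} {t : ℝ} (ht : t ≠ 0) (A : X →L[ℝ] Y) :
    diffQuot f x t u - A u = t⁻¹ • (f (x + t • u) - f x - A (t • u)) := by
  rw [diffQuot, smul_sub _ (f (x + t • u) - f x), map_smul, inv_smul_smul₀ ht]

variable {f : X → Y} {U : Set X} {xb : X}

lemma mem_tanCone_gphOn_iff {w : X} {v : Y} :
    (w, v) ∈ tanCone (gphOn f U) (xb, f xb) ↔
      ∃ (t : ℕ → ℝ) (u : ℕ → X), (∀ᶠ k in atTop, 0 < t k ∧ xb + t k • u k ∈ U) ∧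
        Tendsto t atTop (𝓝 0) ∧ Tendsto u atTop (𝓝 w) ∧
        Tendsto (fun k => diffQuot f xb (t k) (u k)) atTop (𝓝 v) := by
  constructor
  · rintro ⟨t, p, htpos, ht, hp, hmem⟩
    have hq : ∀ k, diffQuot f xb (t k) (p k).1 = (p k).2 := fun k => by
      have h : f (xb + t k • (p k).1) = f xb + t k • (p k).2 := (hmem k).2.symm
      rw [diffQuot, h, add_sub_cancel_left, inv_smul_smul₀ (htpos k).ne']
    refine ⟨t, fun k => (p k).1, .of_forall fun k => ⟨htpos k, (hmem k).1⟩, ht,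
      (continuous_fst.tendsto _).comp hp, ?_⟩
    exact ((continuous_snd.tendsto _).comp hp).congr fun k => (hq k).symm
  · rintro ⟨t, u, hmem, ht, hu, hq⟩
    refine mem_tanCone_of_eventually (hmem.mono fun k ⟨htk, hk⟩ => ⟨htk, hk, ?_⟩) ht
      (hu.prodMk_nhds hq)
    change f xb + t k • diffQuot f xb (t k) (u k) = f (xb + t k • u k)
    rw [diffQuot, smul_inv_smul₀ htk.ne', add_sub_cancel]

lemma HasFDerivWithinAt.tendsto_diffQuot {A : X →L[ℝ] Y} (hf : HasFDerivWithinAt f A U xb)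
    {t : ℕ → ℝ} {u : ℕ → X} {w : X} (hmem : ∀ᶠ k in atTop, 0 < t k ∧ xb + t k • u k ∈ U)
    (ht : Tendsto t atTop (𝓝 0)) (hu : Tendsto u atTop (𝓝 w)) :
    Tendsto (fun k => diffQuot f xb (t k) (u k)) atTop (𝓝 (A w)) := by
  refine hf.lim (c := fun k => (t k)⁻¹) (by simpa using ht.smul hu) (hmem.mono fun k hk => hk.2)
    (hu.congr' (hmem.mono fun k hk => ?_))
  simp [smul_smul, inv_mul_cancel₀ hk.1.ne']

lemma HasFDerivWithinAt.tanCone_gphOn_eq_graph {A : X →L[ℝ] Y}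
    (hf : HasFDerivWithinAt f A U xb) (hU : U ∈ 𝓝 xb) :
    tanCone (gphOn f U) (xb, f xb) = ((A : X →ₗ[ℝ] Y).graph : Set (X × Y)) := by
  ext ⟨w, v⟩
  constructor
  · intro h
    obtain ⟨t, u, hmem, ht, hu, hq⟩ := mem_tanCone_gphOn_iff.mp h
    exact tendsto_nhds_unique hq (hf.tendsto_diffQuot hmem ht hu)
  · rintro (rfl : v = A w)
    have ht : Tendsto (fun k : ℕ => 1 / ((k : ℝ) + 1)) atTop (𝓝 0) :=
      tendsto_one_div_add_atTop_nhds_zero_nat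
    have hmem : ∀ᶠ k : ℕ in atTop, 0 < 1 / ((k : ℝ) + 1) ∧ xb + (1 / ((k : ℝ) + 1)) • w ∈ U :=
      (eventually_add_smul_mem hU ht tendsto_const_nhds).mono fun k hk => ⟨by positivity, hk⟩
    exact mem_tanCone_gphOn_iff.mpr ⟨_, _, hmem, ht, tendsto_const_nhds,
      hf.tendsto_diffQuot hmem ht tendsto_const_nhds⟩

lemma HasFDerivWithinAt.calmAt' {A : X →L[ℝ] Y} (hf : HasFDerivWithinAt f A U xb)
    (hU : U ∈ 𝓝 xb) : CalmAt' f U xb := by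
  obtain ⟨κ, hκ, hO⟩ := hf.isBigO_sub.exists_pos
  rw [nhdsWithin_eq_nhds.mpr hU] at hO
  exact ⟨_, inter_mem hO.bound hU, inter_subset_right, κ, hκ.le, fun x hx => hx.1⟩

lemma frechetDiffOnAt_iff_exists_hasFDerivWithinAt :
    FrechetDiffOnAt f U xb ↔ ∃ A : X →L[ℝ] Y, HasFDerivWithinAt f A U xb := by
  simp only [FrechetDiffOnAt, hasFDerivWithinAt_iff_isLittleO, isLittleO_iff,
    eventually_nhdsWithin_iff, Metric.eventually_nhds_iff, dist_eq_norm]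
  exact exists_congr fun A => forall₂_congr fun ε _ => exists_congr fun δ =>
    and_congr_right' <| forall_congr' fun x => imp.swap

end TangentConeOfGraph

section Calm

variable {X Y : Type*} [NormedAddCommGroup X] [NormedSpace ℝ X]
  [NormedAddCommGroup Y] [NormedSpace ℝ Y]
  {f : X → Y} {U U' : Set X} {xb : X} {κ : ℝ}

lemma norm_le_of_mem_tanCone_gphOn (hU' : U' ∈ 𝓝 xb)
    (hcalm : ∀ x ∈ U', ‖f x - f xb‖ ≤ κ * ‖x - xb‖) {w : X} {v : Y}
    (h : (w, v) ∈ tanCone (gphOn f U) (xb, f xb)) : ‖v‖ ≤ κ * ‖w‖ := by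
  obtain ⟨t, u, hmem, ht, hu, hq⟩ := mem_tanCone_gphOn_iff.mp h
  refine le_of_tendsto_of_tendsto hq.norm (hu.norm.const_mul κ) ?_
  filter_upwards [hmem, eventually_add_smul_mem hU' ht hu] with k hk hk'
  exact norm_diffQuot_le hk.1 (hcalm _ hk')

variable [ProperSpace X] [ProperSpace Y]

lemma exists_subseq_tendsto_mem_tanCone_gphOn {t : ℕ → ℝ} {u : ℕ → X} {R : ℝ}
    (hmem : ∀ᶠ k in atTop, 0 < t k ∧ xb + t k • u k ∈ U) (ht : Tendsto t atTop (𝓝 0))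
    (hbdd : ∀ᶠ k in atTop, ‖(u k, diffQuot f xb (t k) (u k))‖ ≤ R) :
    ∃ p ∈ tanCone (gphOn f U) (xb, f xb), ∃ φ : ℕ → ℕ, StrictMono φ ∧
      Tendsto (fun k => (u (φ k), diffQuot f xb (t (φ k)) (u (φ k)))) atTop (𝓝 p) := by
  obtain ⟨p, -, φ, hφ, hp⟩ := tendsto_subseq_of_frequently_bounded isBounded_closedBall
    (hbdd.mono fun k hk => mem_closedBall_zero_iff.mpr hk).frequently
  exact ⟨p, mem_tanCone_gphOn_iff.mpr ⟨t ∘ φ, u ∘ φ, hφ.tendsto_atTop.eventually hmem,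
    ht.comp hφ.tendsto_atTop, (continuous_fst.tendsto _).comp hp,
    (continuous_snd.tendsto _).comp hp⟩, φ, hφ, hp⟩

lemma exists_mk_mem_tanCone_gphOn (hU' : U' ∈ 𝓝 xb) (hU'U : U' ⊆ U)
    (hcalm : ∀ x ∈ U', ‖f x - f xb‖ ≤ κ * ‖x - xb‖) (w : X) :
    ∃ v, (w, v) ∈ tanCone (gphOn f U) (xb, f xb) := by
  have ht : Tendsto (fun k : ℕ => 1 / ((k : ℝ) + 1)) atTop (𝓝 0) :=
    tendsto_one_div_add_atTop_nhds_zero_nat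
  have hmem' := eventually_add_smul_mem hU' ht (tendsto_const_nhds (x := w))
  obtain ⟨p, hp, φ, -, hpφ⟩ := exists_subseq_tendsto_mem_tanCone_gphOn (u := fun _ => w)
    (R := max ‖w‖ (κ * ‖w‖)) (hmem'.mono fun k hk => ⟨by positivity, hU'U hk⟩) ht
    (hmem'.mono fun k hk => max_le_max le_rfl (norm_diffQuot_le (by positivity) (hcalm _ hk)))
  have hp1 : p.1 = w := tendsto_nhds_unique ((continuous_fst.tendsto _).comp hpφ) tendsto_const_nhds
  exact ⟨p.2, hp1 ▸ hp⟩

lemma hasFDerivWithinAt_of_tanCone_gphOn_subset_graph (hU' : U' ∈ 𝓝 xb)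
    (hcalm : ∀ x ∈ U', ‖f x - f xb‖ ≤ κ * ‖x - xb‖) {A : X →L[ℝ] Y}
    (hA : tanCone (gphOn f U) (xb, f xb) ⊆ ((A : X →ₗ[ℝ] Y).graph : Set (X × Y))) :
    HasFDerivWithinAt f A U xb := by
  refine .of_isLittleO (isLittleO_iff.mpr fun ε hε => ?_)
  by_contra hcon
  obtain ⟨x, hx, hfar⟩ := exists_seq_forall_of_frequently (not_eventually.mp hcon)
  have hne : ∀ k, x k - xb ≠ 0 := fun k h => hfar k (by simp [sub_eq_zero.mp h])
  set t : ℕ → ℝ := fun k => ‖x k - xb‖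
  set u : ℕ → X := fun k => (t k)⁻¹ • (x k - xb)
  have htpos : ∀ k, 0 < t k := fun k => norm_pos_iff.mpr (hne k)
  have hsmul : ∀ k, t k • u k = x k - xb := fun k => smul_inv_smul₀ (htpos k).ne' _
  have hxk : ∀ k, xb + t k • u k = x k := fun k => by rw [hsmul, add_sub_cancel]
  have hu : ∀ k, ‖u k‖ = 1 := fun k => norm_smul_inv_norm (hne k)
  obtain ⟨hxb, hxU⟩ := tendsto_nhdsWithin_iff.mp hx
  have ht : Tendsto t atTop (𝓝 0) := by simpa using (hxb.sub_const xb).norm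
  obtain ⟨p, hp, φ, -, hpφ⟩ := exists_subseq_tendsto_mem_tanCone_gphOn (f := f) (R := max 1 (κ * 1))
    (hxU.mono fun k hk => ⟨htpos k, (hxk k).symm ▸ hk⟩) ht
    ((hxb.eventually_mem hU').mono fun k hk => by
      refine max_le_max (hu k).le (hu k ▸ norm_diffQuot_le (htpos k) ?_)
      rw [hxk]; exact hcalm _ hk)
  have hlim : Tendsto (fun k => ‖diffQuot f xb (t (φ k)) (u (φ k)) - A (u (φ k))‖) atTop (𝓝 0) := by
    have hpA : p.2 = A p.1 := hA hp
    have hcont : Continuous fun q : X × Y => ‖q.2 - A q.1‖ := by fun_prop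
    have := (hcont.tendsto p).comp hpφ
    rwa [hpA, sub_self, norm_zero] at this
  obtain ⟨k, hk⟩ := (hlim.eventually (gt_mem_nhds hε)).exists
  refine hfar (φ k) ?_
  rw [diffQuot_sub_eq_inv_smul (htpos _).ne', norm_smul, norm_inv, Real.norm_of_nonneg (htpos _).le,
    inv_mul_lt_iff₀ (htpos _), hxk, hsmul] at hk
  exact (hk.trans_eq (mul_comm _ _)).le

end Calm

lemma LinearMap.finrank_graph {R M N : Type*} [Ring R] [AddCommGroup M] [Module R M]
    [AddCommGroup N] [Module R N] (A : M →ₗ[R] N) :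
    Module.finrank R A.graph = Module.finrank R M := by
  rw [A.graph_eq_range_prod, LinearMap.finrank_range_of_inj]
  exact fun a b h => congrArg Prod.fst h

lemma CalmAt'.exists_hasFDerivWithinAt {X Y : Type*} [NormedAddCommGroup X] [NormedSpace ℝ X]
    [FiniteDimensional ℝ X] [NormedAddCommGroup Y] [NormedSpace ℝ Y] [FiniteDimensional ℝ Y]
    {f : X → Y} {U : Set X} {xb : X} (hcalm : CalmAt' f U xb)
    (hT : IsLinearSubspace (tanCone (gphOn f U) (xb, f xb))) :
    ∃ A : X →L[ℝ] Y, HasFDerivWithinAt f A U xb := by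
  obtain ⟨U', hU', hU'U, κ, -, hκ⟩ := hcalm
  obtain ⟨S, hS⟩ := hT
  have hbij : Function.Bijective (Prod.fst ∘ S.subtype) := by
    refine ⟨(injective_iff_map_eq_zero ((LinearMap.fst ℝ X Y).comp S.subtype)).mpr ?_,
      fun w => ?_⟩
    · rintro ⟨⟨w, v⟩, hwv⟩ (rfl : w = 0)
      have hv := norm_le_of_mem_tanCone_gphOn hU' hκ (hS.subset hwv)
      rw [norm_zero, mul_zero, norm_le_zero_iff] at hv
      simp [hv]
    · obtain ⟨v, hv⟩ := exists_mk_mem_tanCone_gphOn hU' hU'U hκ w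
      exact ⟨⟨(w, v), hS.symm.subset hv⟩, rfl⟩
  obtain ⟨A, rfl⟩ := S.exists_eq_graph hbij
  exact ⟨LinearMap.toContinuousLinearMap A,
    hasFDerivWithinAt_of_tanCone_gphOn_subset_graph hU' hκ hS.symm.subset⟩

/-- Corollary 2.8: Fréchet differentiability is equivalent to calmness
together with the subspace property of the tangent cone to the graph; in this case the
tangent cone has dimension `n`. -/
theorem stmt_4 {n m : ℕ} (U : Set (Euc n)) (hU : IsOpen U) (f : Euc n → Euc m)
    (xb : Euc n) (hx : xb ∈ U) :
    (FrechetDiffOnAt f U xb ↔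
      (CalmAt' f U xb ∧ IsLinearSubspace (tanCone (gphOn f U) (xb, f xb)))) ∧
    (FrechetDiffOnAt f U xb → HasDim (tanCone (gphOn f U) (xb, f xb)) n) := by
  have hUx : U ∈ 𝓝 xb := hU.mem_nhds hx
  simp only [frechetDiffOnAt_iff_exists_hasFDerivWithinAt]
  refine ⟨⟨fun ⟨A, hA⟩ => ⟨hA.calmAt' hUx, _, (hA.tanCone_gphOn_eq_graph hUx).symm⟩,
    fun ⟨hcalm, hT⟩ => hcalm.exists_hasFDerivWithinAt hT⟩, fun ⟨A, hA⟩ => ?_⟩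
  refine ⟨_, (hA.tanCone_gphOn_eq_graph hUx).symm, ?_⟩
  rw [LinearMap.finrank_graph, finrank_euclideanSpace_fin]
end
end

section
/- Let F: U → ℝᵐ be a single-valued mapping, U ⊆ ℝⁿ open, which is strictly continuous at x̄ ∈ U. Then F is strictly differentiable at x̄ if and only if the B-Jacobian ∇̄F(x̄) is a singleton. -/
open Filter Topology Metric Set
open scoped RealInnerProductSpace NNReal ENNReal

noncomputable section

/-!
A strictly differentiable map has derivatives converging to its strict derivative, so every
limiting Jacobian equals it. Conversely, if `∇̄F(x̄) = {A}`, compactness of the Jacobians of the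
Lipschitz map `F` forces `‖∇F(y) - A‖ ≤ ε` at all points of differentiability `y` near `x̄`. By
Rademacher's theorem and Fubini, almost every segment parallel to a given one meets the
non-differentiability set of `F - A` in a null set, and integrating along such segments shows that
`F - A` is `ε`-Lipschitz near `x̄`, which is strict differentiability.
-/

open MeasureTheory
open scoped Interval

theorem norm_sub_le_of_ae_hasDerivAt {F : Type*} [NormedAddCommGroup F] [NormedSpace ℝ F]
    {φ φ' : ℝ → F} {a b C : ℝ} {K : ℝ≥0} (hφ : LipschitzOnWith K φ (uIcc a b))
    (hφ' : ∀ᵐ t, t ∈ uIcc a b → HasDerivAt φ (φ' t) t ∧ ‖φ' t‖ ≤ C) :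
    ‖φ b - φ a‖ ≤ C * |b - a| := by
  obtain ⟨ℓ, hℓ, hℓφ⟩ := exists_dual_vector'' ℝ (φ b - φ a)
  have hderiv : ∀ᵐ t, t ∈ Ι a b → ‖deriv (ℓ ∘ φ) t‖ ≤ C := by
    filter_upwards [hφ'] with t ht hti
    obtain ⟨hd, hC⟩ := ht (uIoc_subset_uIcc hti)
    rw [(ℓ.hasFDerivAt.comp_hasDerivAt t hd).deriv]
    exact (ℓ.le_opNorm _).trans ((mul_le_of_le_one_left (norm_nonneg _) hℓ).trans hC)
  calc ‖φ b - φ a‖ = (ℓ ∘ φ) b - (ℓ ∘ φ) a := by simp [← map_sub, hℓφ]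
    _ = ∫ t in a..b, deriv (ℓ ∘ φ) t :=
      (ℓ.lipschitz.comp_lipschitzOnWith hφ).absolutelyContinuousOnInterval
        |>.integral_deriv_eq_sub |>.symm
    _ ≤ ‖∫ t in a..b, deriv (ℓ ∘ φ) t‖ := Real.le_norm_self _
    _ ≤ C * |b - a| := intervalIntegral.norm_integral_le_of_norm_le_const_ae hderiv

theorem ae_ae_add_smul_notMem {E : Type*} [NormedAddCommGroup E] [NormedSpace ℝ E]
    [MeasurableSpace E] [BorelSpace E] [SecondCountableTopology E] {μ : Measure E} [SFinite μ]
    [μ.IsAddLeftInvariant] {N : Set E} (hN : μ N = 0) (x v : E) :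
    ∀ᵐ h ∂μ, ∀ᵐ t : ℝ, x + h + t • v ∉ N := by
  have hmeas : MeasurableSet {p : E × ℝ | x + p.1 + p.2 • v ∉ toMeasurable μ N} :=
    (measurableSet_toMeasurable μ N).compl.preimage (by fun_prop)
  have hslice : ∀ᵐ t : ℝ, ∀ᵐ h ∂μ, x + h + t • v ∉ toMeasurable μ N := by
    refine Eventually.of_forall fun t => ?_
    have : μ ((x + t • v + ·) ⁻¹' toMeasurable μ N) = 0 := by
      rw [measure_preimage_add, measure_toMeasurable, hN]
    filter_upwards [measure_eq_zero_iff_ae_notMem.1 this] with h hh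
    rwa [add_right_comm]
  filter_upwards [(Measure.ae_ae_comm hmeas).2 hslice] with h hh
  filter_upwards [hh] with t ht using fun hN => ht (subset_toMeasurable μ N hN)

section Lipschitz

variable {E F : Type*} [NormedAddCommGroup E] [NormedSpace ℝ E]
  [NormedAddCommGroup F] [NormedSpace ℝ F] {g : E → F} {s : Set E} {K C : ℝ≥0}

theorem LipschitzOnWith.norm_sub_le_of_ae_differentiableAt_segment (hg : LipschitzOnWith K g s)
    {a b : E} (hab : ∀ t ∈ Icc (0 : ℝ) 1, a + t • (b - a) ∈ s)
    (hdiff : ∀ᵐ t : ℝ, t ∈ Icc (0 : ℝ) 1 → DifferentiableAt ℝ g (a + t • (b - a)))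
    (hderiv : ∀ y ∈ s, ∀ B : E →L[ℝ] F, HasFDerivAt g B y → ‖B‖ ≤ C) :
    ‖g b - g a‖ ≤ C * ‖b - a‖ := by
  set p : ℝ → E := fun t => a + t • (b - a)
  have hp : LipschitzWith ‖b - a‖₊ p := LipschitzWith.of_dist_le_mul fun t u => by
    simp [p, dist_eq_norm, ← sub_smul, norm_smul, mul_comm]
  have hφ : LipschitzOnWith (K * ‖b - a‖₊) (g ∘ p) (uIcc 0 1) :=
    hg.comp hp.lipschitzOnWith fun t ht => hab t (by simpa using ht)
  have hφ' : ∀ᵐ t : ℝ, t ∈ uIcc 0 1 → HasDerivAt (g ∘ p) (fderiv ℝ g (p t) (b - a)) t ∧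
      ‖fderiv ℝ g (p t) (b - a)‖ ≤ C * ‖b - a‖ := by
    filter_upwards [hdiff] with t hdt ht
    rw [uIcc_of_le zero_le_one] at ht
    have hpt : HasDerivAt p (b - a) t := by
      simpa only [one_smul] using ((hasDerivAt_id' t).smul_const (b - a)).const_add a
    refine ⟨(hdt ht).hasFDerivAt.comp_hasDerivAt t hpt, ?_⟩
    exact (ContinuousLinearMap.le_opNorm _ _).trans
      (by gcongr; exact hderiv _ (hab t ht) _ (hdt ht).hasFDerivAt)
  simpa [p] using norm_sub_le_of_ae_hasDerivAt hφ hφ'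

theorem LipschitzOnWith.of_forall_hasFDerivAt_norm_le [MeasureSpace E] [BorelSpace E]
    [FiniteDimensional ℝ E] [FiniteDimensional ℝ F] [(volume : Measure E).IsAddHaarMeasure]
    (hg : LipschitzOnWith K g s) (hs : IsOpen s) (hconv : Convex ℝ s)
    (hderiv : ∀ y ∈ s, ∀ B : E →L[ℝ] F, HasFDerivAt g B y → ‖B‖ ≤ C) :
    LipschitzOnWith C g s := by
  rw [lipschitzOnWith_iff_norm_sub_le]
  intro b hb a ha
  set N := {y | ¬(y ∈ s → DifferentiableAt ℝ g y)}
  have hN : volume N = 0 := ae_iff.1 <| by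
    filter_upwards [hg.ae_differentiableWithinAt_of_mem] with y hy hys
    exact (hy hys).differentiableAt (hs.mem_nhds hys)
  set G := {h : E | ∀ᵐ t : ℝ, a + h + t • (b - a) ∉ N}
  have hG : Dense G := Measure.dense_of_ae (ae_ae_add_smul_notMem hN a (b - a))
  have htr : ∀ z : E, Tendsto (z + ·) (𝓝 0) (𝓝 z) := fun z => by
    simpa using (continuous_const_add z).tendsto 0
  have hbound : ∀ᶠ h in 𝓝[G] 0, ‖g (b + h) - g (a + h)‖ ≤ C * ‖b - a‖ := by
    have hnear : ∀ᶠ h in 𝓝 (0 : E), a + h ∈ s ∧ b + h ∈ s :=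
      ((htr a).eventually_mem (hs.mem_nhds ha)).and ((htr b).eventually_mem (hs.mem_nhds hb))
    filter_upwards [nhdsWithin_le_nhds hnear, self_mem_nhdsWithin] with h ⟨hah, hbh⟩ hhG
    have hseg : ∀ t ∈ Icc (0 : ℝ) 1, a + h + t • (b - a) ∈ s := fun t ht => by
      simpa using hconv.add_smul_sub_mem hah hbh ht
    have := hg.norm_sub_le_of_ae_differentiableAt_segment (a := a + h) (b := b + h)
      (by simpa using hseg) (by
        filter_upwards [hhG] with t ht ht01
        simpa [N, hseg t ht01] using ht) hderiv
    simpa using this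
  have : (𝓝[G] (0 : E)).NeBot := mem_closure_iff_nhdsWithin_neBot.1 (hG.closure_eq ▸ mem_univ 0)
  have hcont : ∀ z ∈ s, Tendsto (fun h => g (z + h)) (𝓝 0) (𝓝 (g z)) := fun z hz =>
    (hg.continuousOn.continuousAt (hs.mem_nhds hz)).tendsto.comp (htr z)
  have hlim : Tendsto (fun h => ‖g (b + h) - g (a + h)‖) (𝓝[G] 0) (𝓝 ‖g b - g a‖) :=
    ((hcont b hb).sub (hcont a ha)).norm.mono_left nhdsWithin_le_nhds
  exact le_of_tendsto hlim hbound

end Lipschitz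

section StrictDiff

variable {E F : Type*} [NormedAddCommGroup E] [NormedSpace ℝ E]
  [NormedAddCommGroup F] [NormedSpace ℝ F] {f : E → F} {A : E →L[ℝ] F} {x : E}

theorem strictDiffOnAt_iff_hasStrictFDerivAt {U : Set E} (hU : U ∈ 𝓝 x) :
    StrictDiffOnAt f U x ↔ ∃ A : E →L[ℝ] F, HasStrictFDerivAt f A x := by
  simp_rw [hasStrictFDerivAt_iff_isLittleO, Asymptotics.isLittleO_iff, nhds_prod_eq,
    (nhds_basis_ball.prod_self).eventually_iff]
  refine exists_congr fun A => forall_congr' fun ε => imp_congr_right fun _ => ⟨?_, ?_⟩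
  · rintro ⟨δ, hδ, hA⟩
    obtain ⟨ρ, hρ, hρU⟩ := Metric.mem_nhds_iff.1 hU
    refine ⟨min δ ρ, lt_min hδ hρ, fun p ⟨hp₁, hp₂⟩ => ?_⟩
    rw [mem_ball_iff_norm, lt_min_iff] at hp₁ hp₂
    exact hA p.2 (hρU (mem_ball_iff_norm.2 hp₂.2)) p.1 (hρU (mem_ball_iff_norm.2 hp₁.2))
      hp₂.1 hp₁.1
  · rintro ⟨δ, hδ, hA⟩
    exact ⟨δ, hδ, fun y _ y' _ hy hy' =>
      hA (show (y', y) ∈ _ from ⟨mem_ball_iff_norm.2 hy', mem_ball_iff_norm.2 hy⟩)⟩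

theorem hasStrictFDerivAt_of_forall_approximatesLinearOn
    (h : ∀ c : ℝ≥0, 0 < c → ∃ s ∈ 𝓝 x, ApproximatesLinearOn f A s c) :
    HasStrictFDerivAt f A x := by
  refine .of_isLittleO (Asymptotics.isLittleO_iff.2 fun c hc => ?_)
  obtain ⟨s, hs, hfs⟩ := h c.toNNReal (by simpa using hc)
  rw [nhds_prod_eq]
  filter_upwards [prod_mem_prod hs hs] with p hp
  simpa [hc.le] using hfs p.1 hp.1 p.2 hp.2

theorem HasStrictFDerivAt.eventually_norm_sub_le (hf : HasStrictFDerivAt f A x) {ε : ℝ}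
    (hε : 0 < ε) : ∀ᶠ y in 𝓝 x, ∀ B, HasFDerivAt f B y → ‖B - A‖ ≤ ε := by
  obtain ⟨s, hs, hfs⟩ := hf.approximates_deriv_on_nhds (c := ε.toNNReal) (Or.inr (by simpa))
  filter_upwards [eventually_mem_nhds_iff.2 hs] with y hy B hB
  simpa [hε.le] using (hB.sub A.hasFDerivAt).le_of_lipschitzOn hy hfs.lipschitzOnWith

theorem bJacobian_subset_singleton {U : Set E}
    (h : ∀ ε > 0, ∀ᶠ y in 𝓝 x, ∀ B, HasFDerivAt f B y → ‖B - A‖ ≤ ε) :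
    BJacobian f U x ⊆ {A} := by
  rintro B ⟨y, Bk, hBk, hy, hB⟩
  rw [mem_singleton_iff, ← sub_eq_zero, ← norm_le_zero_iff]
  refine le_of_forall_pos_le_add fun ε hε => ?_
  rw [zero_add]
  exact le_of_tendsto (hB.sub_const A).norm
    ((hy.eventually (h ε hε)).mono fun k hk => hk _ (hBk k).2)

theorem HasStrictFDerivAt.bJacobian_eq_singleton {U : Set E} (hf : HasStrictFDerivAt f A x)
    (hx : x ∈ U) : BJacobian f U x = {A} :=
  (bJacobian_subset_singleton fun _ hε => hf.eventually_norm_sub_le hε).antisymm <|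
    singleton_subset_iff.2
      ⟨fun _ => x, fun _ => A, fun _ => ⟨hx, hf.hasFDerivAt⟩, tendsto_const_nhds,
        tendsto_const_nhds⟩

end StrictDiff

theorem StrictlyContinuousAt'.exists_lipschitzOnWith {X Y : Type*} [NormedAddCommGroup X]
    [NormedSpace ℝ X] [NormedAddCommGroup Y] [NormedSpace ℝ Y] {f : X → Y} {U : Set X} {x : X}
    (h : StrictlyContinuousAt' f U x) :
    ∃ K : ℝ≥0, ∃ s ∈ 𝓝 x, LipschitzOnWith K f s := by
  obtain ⟨s, hs, -, κ, -, hκ⟩ := h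
  exact ⟨κ.toNNReal, s, hs,
    LipschitzOnWith.of_dist_le' fun a ha b hb => by simpa [dist_eq_norm] using hκ a ha b hb⟩

section BJacobian

variable {E F : Type*} [NormedAddCommGroup E] [NormedSpace ℝ E] [FiniteDimensional ℝ E]
  [NormedAddCommGroup F] [NormedSpace ℝ F] [FiniteDimensional ℝ F]
  {f : E → F} {A : E →L[ℝ] F} {U s : Set E} {x : E} {K : ℝ≥0}

theorem eventually_norm_sub_le_of_bJacobian_subset (hU : U ∈ 𝓝 x) (hs : s ∈ 𝓝 x)
    (hf : LipschitzOnWith K f s) (hBJ : BJacobian f U x ⊆ {A}) {ε : ℝ} (hε : 0 < ε) :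
    ∀ᶠ y in 𝓝 x, ∀ B, HasFDerivAt f B y → ‖B - A‖ ≤ ε := by
  by_contra hcon
  have hfreq : ∃ᶠ y in 𝓝 x, (y ∈ U ∧ s ∈ 𝓝 y) ∧ ∃ B, HasFDerivAt f B y ∧ ε < ‖B - A‖ := by
    exact ((not_eventually.1 hcon).and_eventually
      ((eventually_mem_set.2 hU).and (eventually_mem_nhds_iff.2 hs))).mono
      fun y ⟨hy, hyU⟩ => ⟨hyU, by simpa using hy⟩
  obtain ⟨y, hy, hyU, B, hB, hBA⟩ : ∃ y : ℕ → E, Tendsto y atTop (𝓝 x) ∧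
      (∀ k, y k ∈ U ∧ s ∈ 𝓝 (y k)) ∧ ∃ B : ℕ → E →L[ℝ] F, (∀ k, HasFDerivAt f (B k) (y k)) ∧
      ∀ k, ε < ‖B k - A‖ := by
    obtain ⟨y, hy, hP⟩ := exists_seq_forall_of_frequently hfreq
    choose hyU B hB hBA using hP
    exact ⟨y, hy, hyU, B, hB, hBA⟩
  have hBK : ∀ k, B k ∈ closedBall 0 K := fun k => by
    simpa using (hB k).le_of_lipschitzOn (hyU k).2 hf
  obtain ⟨B₀, -, φ, hφ, hBφ⟩ := tendsto_subseq_of_bounded isBounded_closedBall hBK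
  have hB₀ : B₀ = A :=
    hBJ ⟨y ∘ φ, B ∘ φ, fun k => ⟨(hyU _).1, hB _⟩, hy.comp hφ.tendsto_atTop, hBφ⟩
  have : ε ≤ ‖B₀ - A‖ :=
    ge_of_tendsto (hBφ.sub_const A).norm (Eventually.of_forall fun k => (hBA _).le)
  simp [hB₀] at this
  linarith

theorem hasStrictFDerivAt_of_bJacobian_subset [MeasureSpace E] [BorelSpace E]
    [(volume : Measure E).IsAddHaarMeasure] (hU : U ∈ 𝓝 x) (hs : s ∈ 𝓝 x)
    (hf : LipschitzOnWith K f s) (hBJ : BJacobian f U x ⊆ {A}) :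
    HasStrictFDerivAt f A x := by
  refine hasStrictFDerivAt_of_forall_approximatesLinearOn fun c hc => ?_
  obtain ⟨δ, hδ, hball⟩ := Metric.mem_nhds_iff.1
    ((eventually_norm_sub_le_of_bJacobian_subset hU hs hf hBJ hc).and hs)
  refine ⟨ball x δ, ball_mem_nhds x hδ, LipschitzOnWith.approximatesLinearOn ?_⟩
  refine ((hf.mono fun y hy => (hball hy).2).sub A.lipschitz.lipschitzOnWith)
    |>.of_forall_hasFDerivAt_norm_le isOpen_ball (convex_ball x δ) fun y hy B hB => ?_
  simpa using (hball hy).1 (B + A)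
    ((hB.add A.hasFDerivAt).congr_of_eventuallyEq (.of_forall fun z => by simp))

end BJacobian

/-- a strictly continuous single-valued mapping is strictly differentiable
at `xb` if and only if its B-Jacobian at `xb` is a singleton. -/
theorem stmt_6 {n m : ℕ} (U : Set (Euc n)) (hU : IsOpen U) (f : Euc n → Euc m)
    (xb : Euc n) (hx : xb ∈ U) (hsc : StrictlyContinuousAt' f U xb) :
    StrictDiffOnAt f U xb ↔ ∃ A : Euc n →L[ℝ] Euc m, BJacobian f U xb = {A} := by
  have hUx : U ∈ 𝓝 xb := hU.mem_nhds hx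
  obtain ⟨K, s, hs, hfs⟩ := hsc.exists_lipschitzOnWith
  rw [strictDiffOnAt_iff_hasStrictFDerivAt hUx]
  exact exists_congr fun A => ⟨fun hA => hA.bJacobian_eq_singleton hx,
    fun hA => hasStrictFDerivAt_of_bJacobian_subset hUx hs hfs hA.subset⟩
end
end
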